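/- (Subproblem equivalence: R₀ is an N-agent Bayes risk.) In the (N+1)-agent sequential model with the L-out-of-(N+1) fusion rule, fix a sequential strategy τ whose first threshold is τ₁, and assume P(Ĥ₁=0) = p₀(1−a(τ₁)) + p₁·b(τ₁) > 0. Let q⁰ = p₀(1−a(τ₁))/(p₀(1−a(τ₁)) + p₁ b(τ₁)) = P(H=0 | Ĥ₁=0). Then c₁₀·q⁰·P(Σ_{n=2}^{N+1} Ĥₙ ≥ L | H=0, Ĥ₁=0) + c₀₁·(1−q⁰)·P(Σ_{n=2}^{N+1} Ĥₙ ≤ L−1 | H=1, Ĥ₁=0) equals the Bayes risk, in the N-agent sequential model with prior probability q⁰ of H=0, costs c₁₀, c₀₁, and the L-out-of-N fusion rule, of the N-agent sequential strategy σ defined by σᵢ(u₁,…,u_{i−1}) = τ_{i+1}(0, u₁,…,u_{i−1}). -/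

import Mathlib

/-!
Given Ĥ₁ = 0, i.e. Y₁ ≤ τ₁, the decisions of agents 2, …, N+1 satisfy the one-step recursion of
the N-agent strategy σ on the signals Y₂, …, Y_{N+1}, and these decisions are determined by that
recursion. Under the product law, Y₁ is independent of (Y₂, …, Y_{N+1}), so conditioning on
{Y₁ ≤ τ₁} does not change the law of the tail: each conditional error probability equals the
corresponding N-agent one. When {Y₁ ≤ τ₁} is null under H = h, the weight q⁰ or 1 − q⁰ in front
of the junk conditional probability vanishes.
-/

open MeasureTheory

noncomputable section

/-- Auxiliary recursion computing the first `k` sequential decisions.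
`decAux τ y k hk j` is the decision of agent `j+1` (0-indexed `j`), defined
recursively: agent `j` decides `1` iff its private signal `y j` exceeds the
threshold `τ j` evaluated at the decisions of agents `0, …, j−1`. -/
def decAux {n : ℕ} (τ : (i : Fin n) → (Fin i.1 → Bool) → ℝ) (y : Fin n → ℝ) :
    (k : ℕ) → k ≤ n → Fin k → Bool
  | 0, _ => Fin.elim0
  | k + 1, h =>
    fun i =>
      if hik : i.1 < k then decAux τ y k (Nat.le_of_succ_le h) ⟨i.1, hik⟩
      else decide (τ ⟨k, h⟩ (decAux τ y k (Nat.le_of_succ_le h)) < y ⟨k, h⟩)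

/-- The local decision `Ĥᵢ` of agent `i` under the sequential strategy `τ` at
signal realization `y`:  `Ĥᵢ = 1{yᵢ > τᵢ(Ĥ₁, …, Ĥ_{i−1})}`. -/
def decs {n : ℕ} (τ : (i : Fin n) → (Fin i.1 → Bool) → ℝ) (y : Fin n → ℝ) (i : Fin n) : Bool :=
  decAux τ y n le_rfl i

/-- Total number of `1` votes `Σᵢ Ĥᵢ` under the sequential strategy `τ`. -/
def ones {n : ℕ} (τ : (i : Fin n) → (Fin i.1 → Bool) → ℝ) (y : Fin n → ℝ) : ℕ :=
  (Finset.univ.filter fun i => decs τ y i = true).card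

/-- Bayes risk of the sequential strategy `τ` for `n` agents with prior
`P(H=0) = q`, costs `c10, c01` and the `K`-out-of-`n` fusion rule; conditionally
on `H = h` the signals are i.i.d. `μh`, modeled by the product measure on
`Fin n → ℝ`. -/
def seqRisk (n : ℕ) (q c10 c01 : ℝ) (μ0 μ1 : Measure ℝ)
    [SigmaFinite μ0] [SigmaFinite μ1] (K : ℕ)
    (τ : (i : Fin n) → (Fin i.1 → Bool) → ℝ) : ℝ :=
  c10 * q * ((Measure.pi fun _ : Fin n => μ0) {y | K ≤ ones τ y}).toReal
    + c01 * (1 - q) * ((Measure.pi fun _ : Fin n => μ1) {y | ¬ K ≤ ones τ y}).toReal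

/-- The parallel strategy with thresholds `lam`: each agent ignores the
precedent decisions. -/
def constStrat {n : ℕ} (lam : Fin n → ℝ) : (i : Fin n) → (Fin i.1 → Bool) → ℝ :=
  fun i _ => lam i

/-- Bayes risk of the parallel strategy with thresholds `lam`. -/
def parRisk (n : ℕ) (q c10 c01 : ℝ) (μ0 μ1 : Measure ℝ)
    [SigmaFinite μ0] [SigmaFinite μ1] (K : ℕ) (lam : Fin n → ℝ) : ℝ :=
  seqRisk n q c10 c01 μ0 μ1 K (constStrat lam)


/-- Conditional probability `P(S | T) = ν(S ∩ T)/ν(T)` (with the junk value `0`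
when `ν T = 0`). -/
def condProb {α : Type*} [MeasurableSpace α] (ν : Measure α) (S T : Set α) : ℝ :=
  (ν (S ∩ T)).toReal / (ν T).toReal

/-- Number of `1` votes `Σ_{n=2}^{N+1} Ĥₙ` among agents `2, …, N+1` (all agents
except the first) under the sequential strategy `τ`. -/
def onesTail {N : ℕ} (τ : (i : Fin (N + 1)) → (Fin i.1 → Bool) → ℝ)
    (y : Fin (N + 1) → ℝ) : ℕ :=
  ((Finset.univ.erase (⟨0, Nat.succ_pos N⟩ : Fin (N + 1))).filter
    fun i => decs τ y i = true).card

section Decisions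

variable {n : ℕ} (τ : (i : Fin n) → (Fin i.1 → Bool) → ℝ) (y : Fin n → ℝ)

theorem decAux_castLE : ∀ (m : ℕ) (hm : m ≤ n) (k : ℕ) (hkm : k ≤ m) (i : Fin k),
    decAux τ y m hm (Fin.castLE hkm i) = decAux τ y k (hkm.trans hm) i
  | 0, _, _, hkm, i => absurd i.2 (by omega)
  | m + 1, hm, k, hkm, i => by
    rcases Nat.lt_or_eq_of_le hkm with hk | rfl
    · have hi : i.1 < m := by omega
      rw [decAux.eq_2]; beta_reduce
      rw [dif_pos (show (Fin.castLE hkm i).1 < m from hi)]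
      exact decAux_castLE m _ k (by omega) i
    · rfl

theorem decs_castLE {k : ℕ} (hk : k ≤ n) (i : Fin k) :
    decs τ y (Fin.castLE hk i) = decAux τ y k hk i :=
  decAux_castLE τ y n le_rfl k hk i

theorem decs_apply (i : Fin n) :
    decs τ y i = decide (τ i (fun j => decs τ y (Fin.castLE i.is_lt.le j)) < y i) := by
  have hdecAux : decAux τ y i.1 i.is_lt.le = fun j => decs τ y (Fin.castLE i.is_lt.le j) :=
    funext fun j => (decs_castLE τ y _ j).symm
  change decs τ y (Fin.castLE i.is_lt (Fin.last i)) = _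
  rw [decs_castLE]
  rw [decAux.eq_2]; beta_reduce
  rw [dif_neg (show ¬ (Fin.last i.1).1 < i.1 from lt_irrefl _), hdecAux]

theorem eq_decs_of_forall {d : Fin n → Bool}
    (hd : ∀ i, d i = decide (τ i (fun j => d (Fin.castLE i.is_lt.le j)) < y i)) :
    d = decs τ y := by
  funext i
  induction i using WellFoundedLT.induction with
  | _ i ih =>
    rw [hd i, decs_apply]
    congr 3
    funext j
    exact ih _ (Fin.lt_def.mpr j.is_lt)

end Decisions

section FirstAgent

variable {N : ℕ} (τ : (i : Fin (N + 1)) → (Fin i.1 → Bool) → ℝ) (y : Fin (N + 1) → ℝ)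

theorem decs_zero : decs τ y 0 = decide (τ 0 Fin.elim0 < y 0) := by
  rw [decs_apply]
  congr
  funext j
  exact j.elim0

theorem decs_eq_cons_of_decs_zero_eq_false {σ : (i : Fin N) → (Fin i.1 → Bool) → ℝ}
    (hσ : ∀ (i : Fin N) (u : Fin i.1 → Bool), σ i u = τ i.succ (Fin.cons false u))
    (hy : decs τ y 0 = false) :
    decs τ y = Fin.cons false (decs σ (Fin.tail y)) := by
  refine (eq_decs_of_forall τ y fun i => ?_).symm
  refine Fin.cases ?_ (fun j => ?_) i
  · rw [Fin.cons_zero, ← hy, decs_apply]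
    congr
    funext j
    exact j.elim0
  · have hprefix : (fun k : Fin (j.1 + 1) => (Fin.cons false (decs σ (Fin.tail y)) :
        Fin (N + 1) → Bool) (Fin.castLE j.succ.is_lt.le k))
        = Fin.cons false (fun k => decs σ (Fin.tail y) (Fin.castLE j.is_lt.le k)) := by
      funext k
      exact Fin.cases rfl (fun _ => rfl) k
    rw [Fin.cons_succ, decs_apply, hσ, ← hprefix]
    rfl

end FirstAgent

theorem card_filter_erase_zero {N : ℕ} (p : Fin (N + 1) → Prop) [DecidablePred p] :
    ((Finset.univ.erase 0).filter p).card = (Finset.univ.filter fun j : Fin N => p j.succ).card := by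
  rw [Fin.univ_succ, Finset.erase_cons, Finset.filter_map, Finset.card_map]
  rfl

theorem onesTail_eq_ones_tail {N : ℕ} (τ : (i : Fin (N + 1)) → (Fin i.1 → Bool) → ℝ)
    {σ : (i : Fin N) → (Fin i.1 → Bool) → ℝ}
    (hσ : ∀ (i : Fin N) (u : Fin i.1 → Bool), σ i u = τ i.succ (Fin.cons false u))
    {y : Fin (N + 1) → ℝ} (hy : decs τ y 0 = false) :
    onesTail τ y = ones σ (Fin.tail y) := by
  rw [onesTail, Fin.zero_eta, card_filter_erase_zero, decs_eq_cons_of_decs_zero_eq_false τ y hσ hy]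
  rfl

theorem condProb_congr_left {α : Type*} [MeasurableSpace α] (ν : Measure α) {S S' T : Set α}
    (h : ∀ x ∈ T, x ∈ S ↔ x ∈ S') : condProb ν S T = condProb ν S' T := by
  have hinter : S ∩ T = S' ∩ T := Set.ext fun x => and_congr_left (h x)
  rw [condProb, condProb, hinter]

section HeadTail

variable {α : Type*} [MeasurableSpace α] {N : ℕ} (μ : Measure α)

theorem pi_head_mem_inter_tail_mem [SigmaFinite μ] (s : Set α) (A : Set (Fin N → α)) :
    (Measure.pi fun _ : Fin (N + 1) => μ) ({y | y 0 ∈ s} ∩ Fin.tail ⁻¹' A)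
      = μ s * (Measure.pi fun _ : Fin N => μ) A := by
  rw [← Measure.prod_prod, ← (measurePreserving_piFinSuccAbove (fun _ => μ) 0).measure_preimage_equiv]
  rfl

variable [IsProbabilityMeasure μ] {s : Set α}

theorem condProb_tail_head (A : Set (Fin N → α)) (hs : μ s ≠ 0) :
    condProb (Measure.pi fun _ : Fin (N + 1) => μ) (Fin.tail ⁻¹' A) {y | y 0 ∈ s}
      = ((Measure.pi fun _ : Fin N => μ) A).toReal := by
  have hhead : {y : Fin (N + 1) → α | y 0 ∈ s} = {y | y 0 ∈ s} ∩ Fin.tail ⁻¹' Set.univ :=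
    (Set.inter_univ _).symm
  rw [condProb, Set.inter_comm, pi_head_mem_inter_tail_mem, hhead, pi_head_mem_inter_tail_mem,
    measure_univ, mul_one, ENNReal.toReal_mul]
  exact mul_div_cancel_left₀ _ (ENNReal.toReal_ne_zero.mpr ⟨hs, measure_ne_top μ s⟩)

theorem mul_condProb_tail_head (A : Set (Fin N → α)) {w : ℝ} (hw : μ s = 0 → w = 0) :
    w * condProb (Measure.pi fun _ : Fin (N + 1) => μ) (Fin.tail ⁻¹' A) {y | y 0 ∈ s}
      = w * ((Measure.pi fun _ : Fin N => μ) A).toReal := by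
  rcases eq_or_ne (μ s) 0 with hs | hs
  · simp [hw hs]
  · rw [condProb_tail_head μ A hs]

end HeadTail

theorem subproblem_B0_is_N_agent_bayes_risk_general
    (μ0 μ1 : Measure ℝ) [IsProbabilityMeasure μ0] [IsProbabilityMeasure μ1]
    (p0 c10 c01 : ℝ)
    (N L : ℕ)
    (τ : (i : Fin (N + 1)) → (Fin i.1 → Bool) → ℝ)
    (a1 b1 q0 : ℝ)
    (ha1 : a1 = (μ0 (Set.Ioi (τ ⟨0, Nat.succ_pos N⟩ Fin.elim0))).toReal)
    (hb1 : b1 = (μ1 (Set.Iic (τ ⟨0, Nat.succ_pos N⟩ Fin.elim0))).toReal)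
    (hpos : 0 < p0 * (1 - a1) + (1 - p0) * b1)
    (hq0 : q0 = p0 * (1 - a1) / (p0 * (1 - a1) + (1 - p0) * b1))
    (σ : (i : Fin N) → (Fin i.1 → Bool) → ℝ)
    (hσ : ∀ (i : Fin N) (u : Fin i.1 → Bool), σ i u = τ i.succ (Fin.cons false u)) :
    c10 * q0 * condProb (Measure.pi fun _ : Fin (N + 1) => μ0)
        {y | L ≤ onesTail τ y}
        {y | decs τ y ⟨0, Nat.succ_pos N⟩ = false}
      + c01 * (1 - q0) * condProb (Measure.pi fun _ : Fin (N + 1) => μ1)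
        {y | ((onesTail τ y : ℤ)) ≤ (L : ℤ) - 1}
        {y | decs τ y ⟨0, Nat.succ_pos N⟩ = false}
    = seqRisk N q0 c10 c01 μ0 μ1 L σ := by
  set t := τ 0 Fin.elim0
  have hfirst : {y : Fin (N + 1) → ℝ | decs τ y ⟨0, Nat.succ_pos N⟩ = false}
      = {y | y 0 ∈ Set.Iic t} := by
    ext y
    show decs τ y 0 = false ↔ y 0 ≤ t
    rw [decs_zero, decide_eq_false_iff_not, not_lt]
  have hμ0_real : μ0.real (Set.Iic t) = 1 - a1 := by
    rw [ha1, ← Set.compl_Ioi, probReal_compl_eq_one_sub measurableSet_Ioi]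
    rfl
  have hnull0 : μ0 (Set.Iic t) = 0 → c10 * q0 = 0 := fun h => by
    have ha : 1 - a1 = 0 := by rw [← hμ0_real, measureReal_def, h, ENNReal.toReal_zero]
    rw [hq0, ha, mul_zero, zero_div, mul_zero]
  have hnull1 : μ1 (Set.Iic t) = 0 → c01 * (1 - q0) = 0 := fun h => by
    have hb : b1 = 0 := by rw [hb1]; exact (ENNReal.toReal_eq_zero_iff _).mpr (.inl h)
    rw [hb, mul_zero, add_zero] at hq0 hpos
    rw [hq0, div_self hpos.ne', sub_self, mul_zero]
  have htail : ∀ y ∈ {y : Fin (N + 1) → ℝ | decs τ y ⟨0, Nat.succ_pos N⟩ = false},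
      onesTail τ y = ones σ (Fin.tail y) := fun y hy => onesTail_eq_ones_tail τ hσ hy
  rw [condProb_congr_left _ (S := {y | L ≤ onesTail τ y}) (S' := Fin.tail ⁻¹' {z | L ≤ ones σ z})
      fun y hy => by
        show L ≤ onesTail τ y ↔ L ≤ ones σ (Fin.tail y)
        rw [htail y hy],
    condProb_congr_left _ (S := {y | (onesTail τ y : ℤ) ≤ L - 1})
      (S' := Fin.tail ⁻¹' {z | ¬ L ≤ ones σ z}) fun y hy => by
        show (onesTail τ y : ℤ) ≤ L - 1 ↔ ¬ L ≤ ones σ (Fin.tail y)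
        rw [htail y hy]
        omega,
    hfirst, mul_condProb_tail_head μ0 _ hnull0, mul_condProb_tail_head μ1 _ hnull1]
  rfl

/-- **Subproblem equivalence: `R₀` is an `N`-agent Bayes risk.**  In the
`(N+1)`-agent sequential model with the `L`-out-of-`(N+1)` fusion rule, fix a
sequential strategy `τ` with first threshold `τ₁`, and assume
`P(Ĥ₁ = 0) = p0(1 − a(τ₁)) + p1·b(τ₁) > 0`.  Let
`q0 = p0(1 − a(τ₁))/(p0(1 − a(τ₁)) + p1·b(τ₁)) = P(H=0 | Ĥ₁=0)`.  Then
`c10·q0·P(Σ_{n=2}^{N+1} Ĥₙ ≥ L | H=0, Ĥ₁=0)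
  + c01·(1−q0)·P(Σ_{n=2}^{N+1} Ĥₙ ≤ L−1 | H=1, Ĥ₁=0)`
equals the Bayes risk, in the `N`-agent sequential model with prior `q0`, costs
`c10, c01` and the `L`-out-of-`N` fusion rule, of the strategy
`σᵢ(u₁,…,u_{i−1}) = τ_{i+1}(0, u₁, …, u_{i−1})`. -/
theorem subproblem_B0_is_N_agent_bayes_risk
    (μ0 μ1 : Measure ℝ) [IsProbabilityMeasure μ0] [IsProbabilityMeasure μ1]
    (p0 c10 c01 : ℝ) (hp0 : p0 ∈ Set.Ioo (0 : ℝ) 1) (hc10 : 0 < c10) (hc01 : 0 < c01)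
    (N L : ℕ) (hL1 : 1 ≤ L) (hLN : L ≤ N + 1)
    (τ : (i : Fin (N + 1)) → (Fin i.1 → Bool) → ℝ)
    (a1 b1 q0 : ℝ)
    (ha1 : a1 = (μ0 (Set.Ioi (τ ⟨0, Nat.succ_pos N⟩ Fin.elim0))).toReal)
    (hb1 : b1 = (μ1 (Set.Iic (τ ⟨0, Nat.succ_pos N⟩ Fin.elim0))).toReal)
    (hpos : 0 < p0 * (1 - a1) + (1 - p0) * b1)
    (hq0 : q0 = p0 * (1 - a1) / (p0 * (1 - a1) + (1 - p0) * b1))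
    (σ : (i : Fin N) → (Fin i.1 → Bool) → ℝ)
    (hσ : ∀ (i : Fin N) (u : Fin i.1 → Bool), σ i u = τ i.succ (Fin.cons false u)) :
    c10 * q0 * condProb (Measure.pi fun _ : Fin (N + 1) => μ0)
        {y | L ≤ onesTail τ y}
        {y | decs τ y ⟨0, Nat.succ_pos N⟩ = false}
      + c01 * (1 - q0) * condProb (Measure.pi fun _ : Fin (N + 1) => μ1)
        {y | ((onesTail τ y : ℤ)) ≤ (L : ℤ) - 1}
        {y | decs τ y ⟨0, Nat.succ_pos N⟩ = false}
    = seqRisk N q0 c10 c01 μ0 μ1 L σ :=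
  subproblem_B0_is_N_agent_bayes_risk_general μ0 μ1 p0 c10 c01 N L τ a1 b1 q0 ha1 hb1 hpos hq0 σ hσ
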